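/- For positive definite Hermitian matrices A, B and positive definite Hermitian weight Ω, the weighted Hellinger quantity tr(ΩA) + tr(ΩB) - 2·tr((B^{1/2} Ω A Ω B^{1/2})^{1/2}) is nonnegative. -/

import Mathlib

/-!
Write `a, b, o` for the square roots of `A, B, Ω`, and put `Y = o a`, `Z = o b`. Then
`tr (Ω A) = tr (Yᴴ Y)`, `tr (Ω B) = tr (Zᴴ Z)`, and `b Ω A Ω b = Wᴴ W` for `W = Yᴴ Z`, so the
middle term is `tr R` with `R = (Wᴴ W)^{1/2}`. Everything is invertible, so `W = U R` with
`U = W R⁻¹` unitary, and `tr R = tr ((Y U)ᴴ Z)`. Expanding `tr ((Y U - Z)ᴴ (Y U - Z)) ≥ 0` gives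
`2 Re tr R ≤ tr (Yᴴ Y) + tr (Zᴴ Z)`.
-/

open Matrix
open scoped ComplexOrder

/-- The positive semidefinite square root, with its definition from the older Mathlib
(`Matrix.PosSemidef.sqrt`, removed since). -/
noncomputable def Matrix.PosSemidef.sqrt {n : Type*} [Fintype n] [DecidableEq n] {𝕜 : Type*} [RCLike 𝕜]
    {A : Matrix n n 𝕜} (hA : A.PosSemidef) : Matrix n n 𝕜 :=
  hA.1.eigenvectorUnitary.1 * diagonal ((↑) ∘ (√·) ∘ hA.1.eigenvalues) *
    (star hA.1.eigenvectorUnitary : Matrix n n 𝕜)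

namespace Matrix

variable {n 𝕜 : Type*} [Fintype n] [RCLike 𝕜]

namespace PosSemidef

variable [DecidableEq n] {A : Matrix n n 𝕜} (hA : A.PosSemidef)

lemma sqrt_eq_conjStarAlgAut : hA.sqrt =
    Unitary.conjStarAlgAut 𝕜 _ hA.1.eigenvectorUnitary (diagonal ((↑) ∘ (√·) ∘ hA.1.eigenvalues)) :=
  rfl

lemma sqrt_mul_self : hA.sqrt * hA.sqrt = A := by
  conv_rhs => rw [hA.1.spectral_theorem]
  rw [sqrt_eq_conjStarAlgAut, ← map_mul, diagonal_mul_diagonal]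
  congr 2 with i
  simp [← RCLike.ofReal_mul, Real.mul_self_sqrt (hA.eigenvalues_nonneg i)]

lemma posSemidef_sqrt : hA.sqrt.PosSemidef := by
  unfold PosSemidef.sqrt
  rw [star_eq_conjTranspose]
  exact (PosSemidef.diagonal fun i => by simp).mul_mul_conjTranspose_same _

end PosSemidef

lemma re_trace_conjTranspose_mul_self_nonneg (M : Matrix n n 𝕜) :
    0 ≤ RCLike.re (Mᴴ * M).trace :=
  (RCLike.nonneg_iff.mp (posSemidef_conjTranspose_mul_self M).trace_nonneg).1

lemma two_mul_re_trace_conjTranspose_mul_le (M N : Matrix n n 𝕜) :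
    2 * RCLike.re (Mᴴ * N).trace ≤ RCLike.re (Mᴴ * M).trace + RCLike.re (Nᴴ * N).trace := by
  have h := re_trace_conjTranspose_mul_self_nonneg (M - N)
  have hNM : RCLike.re (Nᴴ * M).trace = RCLike.re (Mᴴ * N).trace := by
    rw [← conjTranspose_conjTranspose M, ← conjTranspose_mul, trace_conjTranspose,
      conjTranspose_conjTranspose, RCLike.star_def, RCLike.conj_re]
  simp only [conjTranspose_sub, sub_mul, mul_sub, trace_sub, map_sub] at h
  linarith

lemma trace_conjTranspose_mul_self_mul_eq {a o : Matrix n n 𝕜} (ha : a.IsHermitian)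
    (ho : o.IsHermitian) : ((o * a)ᴴ * (o * a)).trace = (o * o * (a * a)).trace := by
  rw [conjTranspose_mul, ha.eq, ho.eq, Matrix.mul_assoc, trace_mul_comm]
  simp only [Matrix.mul_assoc]

lemma two_mul_re_trace_le_of_mul_self_eq [DecidableEq n] {Y Z R : Matrix n n 𝕜}
    (hRH : R.IsHermitian) (hR : IsUnit R) (hRR : R * R = (Yᴴ * Z)ᴴ * (Yᴴ * Z)) :
    2 * RCLike.re R.trace ≤ RCLike.re (Yᴴ * Y).trace + RCLike.re (Zᴴ * Z).trace := by
  have hRdet : IsUnit R.det := (isUnit_iff_isUnit_det R).mp hR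
  set U := Yᴴ * Z * R⁻¹
  have hUR : Uᴴ * (Yᴴ * Z) = R := by
    rw [conjTranspose_mul, conjTranspose_nonsing_inv, hRH.eq, Matrix.mul_assoc, ← hRR,
      ← Matrix.mul_assoc, nonsing_inv_mul _ hRdet, Matrix.one_mul]
  have hUU : U * Uᴴ = 1 := by
    refine mul_eq_one_comm.mp ?_
    change Uᴴ * (Yᴴ * Z * R⁻¹) = 1
    rw [← Matrix.mul_assoc, hUR, mul_nonsing_inv _ hRdet]
  have hYU : (Y * U)ᴴ * Z = R := by
    rw [conjTranspose_mul, Matrix.mul_assoc, ← hUR]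
  have hYUYU : ((Y * U)ᴴ * (Y * U)).trace = (Yᴴ * Y).trace := by
    rw [conjTranspose_mul, Matrix.mul_assoc, trace_mul_comm, Matrix.mul_assoc, Matrix.mul_assoc,
      hUU, Matrix.mul_one]
  simpa only [hYU, hYUYU] using two_mul_re_trace_conjTranspose_mul_le (Y * U) Z

lemma two_mul_re_trace_le_of_mul_self_eq_sq_conj [DecidableEq n]
    {a b o R : Matrix n n 𝕜} (ha : a.IsHermitian) (hb : b.IsHermitian) (ho : o.IsHermitian)
    (hRH : R.IsHermitian) (hR : IsUnit R) (hRR : R * R = b * (o * o) * (a * a) * (o * o) * b) :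
    2 * RCLike.re R.trace ≤
      RCLike.re (o * o * (a * a)).trace + RCLike.re (o * o * (b * b)).trace := by
  rw [← trace_conjTranspose_mul_self_mul_eq ha ho, ← trace_conjTranspose_mul_self_mul_eq hb ho]
  refine two_mul_re_trace_le_of_mul_self_eq hRH hR ?_
  rw [hRR]
  simp only [conjTranspose_mul, ha.eq, hb.eq, ho.eq, Matrix.mul_assoc]

end Matrix

theorem weighted_hellinger_nonneg (n : ℕ)
    (A B Ω : Matrix (Fin n) (Fin n) ℂ)
    (hA : A.PosDef) (hB : B.PosDef) (hΩ : Ω.PosDef)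
    (hS : (hB.posSemidef.sqrt * Ω * A * Ω * hB.posSemidef.sqrt).PosSemidef) :
    0 ≤ (Ω * A).trace.re + (Ω * B).trace.re - 2 * hS.sqrt.trace.re := by
  have hA2 := hA.posSemidef.sqrt_mul_self
  have hB2 := hB.posSemidef.sqrt_mul_self
  have hΩ2 := hΩ.posSemidef.sqrt_mul_self
  have hb : IsUnit hB.posSemidef.sqrt := isUnit_of_mul_isUnit_left (hB2 ▸ hB.isUnit)
  have hR : IsUnit hS.sqrt := by
    refine isUnit_of_mul_isUnit_left (y := hS.sqrt) ?_
    rw [hS.sqrt_mul_self]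
    exact (((hb.mul hΩ.isUnit).mul hA.isUnit).mul hΩ.isUnit).mul hb
  have key := two_mul_re_trace_le_of_mul_self_eq_sq_conj hA.posSemidef.posSemidef_sqrt.1
    hB.posSemidef.posSemidef_sqrt.1 hΩ.posSemidef.posSemidef_sqrt.1 hS.posSemidef_sqrt.1 hR
    (by rw [hS.sqrt_mul_self, hA2, hΩ2])
  rw [hA2, hB2, hΩ2] at key
  simp only [RCLike.re_to_complex] at key
  linarith
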